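/- Let A₁ be a classical family in a P-tracial algebra. Then for every k ≥ 1, every p ∈ P_k and every a₁,…,a_k ∈ A₁: κ_p(a₁,…,a_k) = Π_{b ∈ p∨id_k} δ_{p_{|b} = 0_{|b|/2}} · cum_{|b|/2}((a_i)_{i ∈ b∩{1,…,k}}), i.e. the P-cumulant is the product, over the cycles b of p, of the classical cumulant of the elements indexed by b when the extraction of p to b is the one-block partition, and is 0 if the extraction of p to some cycle is not the one-block partition. -/

import Mathlib

open scoped Classical

/-- Partitions of `{1,…,k,1′,…,k′}`, modelled as setoids on `Fin k ⊕ Fin k`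
(unprimed elements on the left, primed on the right). -/
abbrev PP (k : ℕ) := Setoid (Fin k ⊕ Fin k)

noncomputable instance setoidFintypeInst {α : Type*} [Fintype α] : Fintype (Setoid α) :=
  Fintype.ofInjective
    (fun s : Setoid α => (Finset.univ.filter fun p : α × α => s p.1 p.2))
    (by
      intro s t h
      have h' : ∀ x y : α, s x y ↔ t x y := by
        intro x y
        have := Finset.ext_iff.mp h (x, y)
        simpa using this
      exact Setoid.ext h')

/-- number of blocks of a partition -/
noncomputable def nC {α : Type*} (s : Setoid α) : ℕ := Nat.card (Quotient s)

/-- the identity partition `{{i,i′}}`. -/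
def idP (k : ℕ) : PP k := Setoid.ker (Sum.elim (id : Fin k → Fin k) id)

/-- twice the distance `d(p,q) = (nc p + nc q)/2 − nc (p ⊔ q)`. -/
noncomputable def d2 {k : ℕ} (p q : PP k) : ℤ := (nC p : ℤ) + nC q - 2 * nC (p ⊔ q)

/-- the geodesic order on partitions: `q ≤ p` iff `d(id,q) + d(q,p) = d(id,p)`. -/
def pLe {k : ℕ} (q p : PP k) : Prop := d2 (idP k) q + d2 q p = d2 (idP k) p

/-- a permutation `σ` seen as the partition `{{i, σ(i)′}}`. -/
def permToP {k : ℕ} (σ : Equiv.Perm (Fin k)) : PP k :=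
  Setoid.ker (Sum.elim (fun i => σ i) (fun j => j))

/-- tensor product of partitions: place `q` to the right of `p`. -/
def ptensor {k l : ℕ} (p : PP k) (q : PP l) : PP (k + l) :=
  Setoid.ker (fun x : Fin (k + l) ⊕ Fin (k + l) =>
    match x with
    | Sum.inl i =>
      (match finSumFinEquiv.symm i with
       | Sum.inl a => (Sum.inl (Quotient.mk p (Sum.inl a)) : Quotient p ⊕ Quotient q)
       | Sum.inr b => Sum.inr (Quotient.mk q (Sum.inl b)))
    | Sum.inr i =>
      (match finSumFinEquiv.symm i with
       | Sum.inl a => Sum.inl (Quotient.mk p (Sum.inr a))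
       | Sum.inr b => Sum.inr (Quotient.mk q (Sum.inr b))))

/-- transpose of a partition: exchange `i` and `i′`. -/
def ptrans {k : ℕ} (p : PP k) : PP k := Setoid.comap Sum.swap p

/-- the map exchanging `j` and `j′` for the (0-based) indices `j ≥ l`. -/
def swapAbove {k : ℕ} (l : ℕ) : Fin k ⊕ Fin k → Fin k ⊕ Fin k
  | Sum.inl i => if l ≤ (i : ℕ) then Sum.inr i else Sum.inl i
  | Sum.inr i => if l ≤ (i : ℕ) then Sum.inl i else Sum.inr i

/-- the operation `S_l` on partitions: exchange `j` and `j′` for every column `j > l`. -/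
def sOp {k : ℕ} (l : ℕ) (p : PP k) : PP k := Setoid.comap (swapAbove l) p

/-- the setoid of "same cycle of σ". -/
def sameCycleSetoid {k : ℕ} (σ : Equiv.Perm (Fin k)) : Setoid (Fin k) :=
  ⟨σ.SameCycle, ⟨fun _ => Equiv.Perm.SameCycle.refl σ _, fun h => h.symm, fun h h' => h.trans h'⟩⟩

/-- number of orbits (fixed points included) of a permutation. -/
noncomputable def cyc {k : ℕ} (σ : Equiv.Perm (Fin k)) : ℕ :=
  Nat.card (Quotient (sameCycleSetoid σ))

/-- reflection length `ℓ(σ) = k − c(σ)`. -/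
noncomputable def plen {k : ℕ} (σ : Equiv.Perm (Fin k)) : ℤ := (k : ℤ) - cyc σ

/-- the geodesic (absolute) order on permutations. -/
def permLe {k : ℕ} (τ σ : Equiv.Perm (Fin k)) : Prop := plen τ + plen (τ⁻¹ * σ) = plen σ

/-- `σ₁ ⊕ σ₂`, acting as `σ₁` on `{1,…,l}` and as the shifted copy of `σ₂` on `{l+1,…,l+m}`. -/
def sumPerm {l m : ℕ} (σ₁ : Equiv.Perm (Fin l)) (σ₂ : Equiv.Perm (Fin m)) :
    Equiv.Perm (Fin (l + m)) :=
  finSumFinEquiv.permCongr (Equiv.sumCongr σ₁ σ₂)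

/-- the setoid generated by a relation `r`. -/
def genSetoid {α : Type*} (r : α → α → Prop) : Setoid α :=
  sInf {s : Setoid α | ∀ x y, r x y → s x y}

/-- the lexicographic encoding `(j, t) ↦ ∑_{j' < j} n j' + t` of `Σ j, Fin (n j)` into
`Fin (∑ j, n j)`. -/
def encodeSigma {k : ℕ} (n : Fin k → ℕ) (x : Σ j : Fin k, Fin (n j)) : Fin (∑ j, n j) :=
  ⟨(∑ j' ∈ Finset.univ.filter fun j' => j' < x.1, n j') + (x.2 : ℕ), by
    calc (∑ j' ∈ Finset.univ.filter fun j' => j' < x.1, n j') + (x.2 : ℕ)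
        < (∑ j' ∈ Finset.univ.filter fun j' => j' < x.1, n j') + n x.1 := by
          exact Nat.add_lt_add_left x.2.isLt _
      _ = ∑ j' ∈ insert x.1 (Finset.univ.filter fun j' => j' < x.1), n j' := by
          rw [Finset.sum_insert (by simp)]
          ring
      _ ≤ ∑ j', n j' := Finset.sum_le_sum_of_subset (Finset.subset_univ _)⟩

/-- `endOf n x` identifies `x` as an external endpoint of its group: the top of the `j`-th
group if `x` is the first unprimed element, the bottom if `x` is the last primed one. -/
def endOf {k : ℕ} (n : Fin k → ℕ) :
    (Σ j : Fin k, Fin (n j)) ⊕ (Σ j : Fin k, Fin (n j)) → Option (Fin k ⊕ Fin k)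
  | Sum.inl ⟨j, t⟩ => if (t : ℕ) = 0 then some (Sum.inl j) else none
  | Sum.inr ⟨j, t⟩ => if (t : ℕ) + 1 = n j then some (Sum.inr j) else none

/-- the elementary relations defining the partition `Insⁿ(p) ∘ σ` appearing in the
product-compatibility axiom: within the `j`-th group, the primed (bottom) vertex of a
factor is glued to the unprimed (top) vertex of the next factor, and the external
endpoints of the groups are glued according to `p`. -/
def chainRel {k : ℕ} (n : Fin k → ℕ) (p : PP k) :
    ((Σ j : Fin k, Fin (n j)) ⊕ (Σ j : Fin k, Fin (n j))) →
      ((Σ j : Fin k, Fin (n j)) ⊕ (Σ j : Fin k, Fin (n j))) → Prop :=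
  fun x y =>
    (∃ (j : Fin k) (t : ℕ) (h1 : t + 1 < n j),
        x = Sum.inr ⟨j, ⟨t, Nat.lt_of_succ_lt h1⟩⟩ ∧ y = Sum.inl ⟨j, ⟨t + 1, h1⟩⟩) ∨
    (∃ u v, p u v ∧ endOf n x = some u ∧ endOf n y = some v)

/-- the partition `Insⁿ_i(p) ∘ σ ∈ P_{∑ n_j}` of the product-compatibility axiom. -/
def insPart {k : ℕ} (n : Fin k → ℕ) (p : PP k) : PP (∑ j, n j) :=
  genSetoid fun x y =>
    ∃ u v, chainRel n p u v ∧
      x = Sum.map (encodeSigma n) (encodeSigma n) u ∧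
      y = Sum.map (encodeSigma n) (encodeSigma n) v

/-- relabelling of the columns of a partition by a permutation: `σ ∘ p ∘ σ⁻¹`. -/
def relabel {k : ℕ} (σ : Equiv.Perm (Fin k)) (p : PP k) : PP k :=
  Setoid.comap (Sum.map σ.symm σ.symm) p

/-- A `P`-tracial algebra: a complex algebra `A` together with `k`-linear forms
`m_p : A^k → ℂ`, indexed by the partitions `p ∈ P_k`, which are symmetric under
simultaneous relabelling of the columns and of the arguments, and compatible with the
product of `A`. -/
structure PTracial (A : Type*) [Ring A] [Algebra ℂ A] where
  m : ∀ k : ℕ, PP k → (Fin k → A) → ℂ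
  m_add : ∀ (k : ℕ) (p : PP k) (a : Fin k → A) (s : Fin k) (x y : A),
    m k p (Function.update a s (x + y)) =
      m k p (Function.update a s x) + m k p (Function.update a s y)
  m_smul : ∀ (k : ℕ) (p : PP k) (a : Fin k → A) (s : Fin k) (c : ℂ) (x : A),
    m k p (Function.update a s (c • x)) = c * m k p (Function.update a s x)
  m_symm : ∀ (k : ℕ) (p : PP k) (σ : Equiv.Perm (Fin k)) (a : Fin k → A),
    m k p a = m k (relabel σ p) fun s => a (σ.symm s)
  m_prod : ∀ (k : ℕ) (p : PP k) (n : Fin k → ℕ), (∀ j, 0 < n j) →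
    ∀ (a : ∀ j : Fin k, Fin (n j) → A) (b : Fin (∑ j, n j) → A),
      (∀ (j : Fin k) (t : Fin (n j)), b (encodeSigma n ⟨j, t⟩) = a j t) →
      m k p (fun j => (List.ofFn (a j)).prod) = m (∑ j, n j) (insPart n p) b

/-- extraction of a partition to a subset `J` of its columns. -/
def extractP {k : ℕ} (p : PP k) (J : Finset (Fin k)) : PP J.card :=
  Setoid.comap
    (Sum.map (fun t => ((J.orderIsoOfFin rfl t : J) : Fin k))
      (fun t => ((J.orderIsoOfFin rfl t : J) : Fin k))) p

/-- columns `s` and `t` meet a common block of `p`. -/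
def colRel {k : ℕ} (p : PP k) (s t : Fin k) : Prop :=
  p (Sum.inl s) (Sum.inl t) ∨ p (Sum.inl s) (Sum.inr t) ∨
    p (Sum.inr s) (Sum.inl t) ∨ p (Sum.inr s) (Sum.inr t)

/-- `P`-freeness of two subalgebras, relative to the `P`-cumulant forms `κ`:
not-compatible mixed cumulants vanish, and cumulants factorize over tensor products. -/
def PFree {A : Type*} [Ring A] [Algebra ℂ A]
    (κ : ∀ k : ℕ, PP k → (Fin k → A) → ℂ) (A₁ A₂ : Subalgebra ℂ A) : Prop :=
  (∀ (k : ℕ) (p : PP k) (a : Fin k → A), (∀ s, a s ∈ A₁ ∨ a s ∈ A₂) →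
    (∃ s s' : Fin k, a s ∈ A₁ ∧ a s' ∈ A₂ ∧ colRel p s s') → κ k p a = 0) ∧
  (∀ (k₁ k₂ : ℕ) (p₁ : PP k₁) (p₂ : PP k₂) (a : Fin k₁ → A) (b : Fin k₂ → A),
    (∀ s, a s ∈ A₁) → (∀ s, b s ∈ A₂) →
    κ (k₁ + k₂) (ptensor p₁ p₂) (Fin.append a b) = κ k₁ p₁ a * κ k₂ p₂ b)

/-- the partition of the columns into the cycles of `p` (the blocks of `p ∨ id_k`). -/
def colSetoid {k : ℕ} (p : PP k) : Setoid (Fin k) :=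
  Setoid.comap Sum.inl (p ⊔ idP k)

/-- the blocks of a set partition of `Fin k`, as a finite set of finite sets. -/
noncomputable def classesOf {k : ℕ} (q : Setoid (Fin k)) : Finset (Finset (Fin k)) :=
  Finset.univ.image fun j => Finset.univ.filter fun j' => q j j'

/-
For a classical family the moments are `m_p(a) = ∑_{π ≤ σ(p)} cum_π(a)`, where `σ(p)` is the set
partition of `{1,…,k}` into the cycles of `p` and `cum_π` the multiplicative extension of the
classical cumulants. Indeed, relabelling the columns so that one cycle `b` of `p` comes first turns
`p` into `p_{|b} ⊗ p_{|bᶜ}`; determinism factors `m_p`, the irreducible `p_{|b}` has the moment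
`m_{0}` given by the moment–cumulant formula, and induction handles `p_{|bᶜ}`.

The right-hand side `g(q)` of the theorem vanishes unless the blocks of `q` are the `c ∪ c′` for
the blocks `c` of some set partition `π`, in which case `g(q) = cum_π(a)`; such a `q` lies below `p`
in the geodesic order exactly when `π ≤ σ(p)`. Hence `∑_{q ≤ p} g(q) = m_p(a) = ∑_{q ≤ p} κ_q(a)`
for every `p`, and as the geodesic order is triangular for `d(id_k, ·)`, `κ = g`.
-/

namespace Setoid

variable {α β : Type*}

theorem comap_sup_of_forall_mem_range (f : α → β) (r s : Setoid β)
    (hf : ∀ x y, (r ⊔ s) (f x) y → y ∈ Set.range f) :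
    comap f (r ⊔ s) = comap f r ⊔ comap f s := by
  refine le_antisymm ?_ (sup_le (fun x y h => le_sup_left (a := r) h)
    (fun x y h => le_sup_right (a := r) h))
  intro x y hxy
  rw [comap_rel, sup_eq_eqvGen] at hxy
  suffices H : ∀ u v, Relation.EqvGen (fun a b => r a b ∨ s a b) u v →
      ∀ x y, f x = u → f y = v → (comap f r ⊔ comap f s) x y from H _ _ hxy x y rfl rfl
  intro u v huv
  induction huv with
  | rel u v h =>
    rintro x y rfl rfl
    exact h.elim (fun h => le_sup_left (a := comap f r) h)
      (fun h => le_sup_right (a := comap f r) h)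
  | refl u =>
    rintro x y rfl hy
    exact le_sup_left (a := comap f r) (show r (f x) (f y) from hy ▸ r.refl' _)
  | symm u v _ ih =>
    rintro x y rfl rfl
    exact symm' _ (ih y x rfl rfl)
  | trans u v w huv _ ih₁ ih₂ =>
    rintro x y rfl rfl
    obtain ⟨z, rfl⟩ := hf x v (by rw [sup_eq_eqvGen]; exact huv)
    exact trans' _ (ih₁ x z rfl rfl) (ih₂ z y rfl rfl)

theorem map_of_le_surjective {s t : Setoid α} (h : s ≤ t) : Function.Surjective (map_of_le h) :=
  Quotient.ind fun x => ⟨Quotient.mk s x, rfl⟩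

end Setoid

section NumberOfBlocks

variable {α β : Type*}

theorem nC_comap_of_surjective {f : α → β} (hf : Function.Surjective f) (s : Setoid β) :
    nC (s.comap f) = nC s := by
  rw [Setoid.comap_eq]
  exact Nat.card_congr (Setoid.quotientKerEquivOfSurjective _ (Quotient.mk''_surjective.comp hf))

theorem nC_top_of_nonempty [Nonempty α] : nC (⊤ : Setoid α) = 1 := by
  rw [nC, Nat.card_eq_one_iff_unique]
  exact ⟨⟨fun x y => Quotient.inductionOn₂ x y fun _ _ => Quotient.sound trivial⟩,
    ⟨Quotient.mk _ (Classical.arbitrary α)⟩⟩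

variable {s t : Setoid α}

theorem nC_le_of_le [Finite α] (h : s ≤ t) : nC t ≤ nC s :=
  Nat.card_le_card_of_surjective _ (Setoid.map_of_le_surjective h)

theorem eq_of_le_of_nC_eq [Finite α] (h : s ≤ t) (hc : nC s = nC t) : s = t := by
  have hinj := ((Setoid.map_of_le_surjective h).bijective_of_nat_card_le hc.le).injective
  exact le_antisymm h fun x y hxy => Quotient.exact (hinj (Quotient.sound hxy : _ = _))

end NumberOfBlocks

section GeodesicOrder

variable {k : ℕ}

theorem d2_nonneg (p q : PP k) : 0 ≤ d2 p q := by
  have := nC_le_of_le (le_sup_left : p ≤ p ⊔ q)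
  have := nC_le_of_le (le_sup_right : q ≤ p ⊔ q)
  unfold d2
  omega

theorem eq_of_d2_eq_zero {p q : PP k} (h : d2 p q = 0) : p = q := by
  have h₁ := nC_le_of_le (le_sup_left : p ≤ p ⊔ q)
  have h₂ := nC_le_of_le (le_sup_right : q ≤ p ⊔ q)
  unfold d2 at h
  exact (eq_of_le_of_nC_eq le_sup_left (by omega)).trans
    (eq_of_le_of_nC_eq le_sup_right (by omega)).symm

theorem pLe_refl (p : PP k) : pLe p p := by
  simp only [pLe, d2, sup_idem]
  ring

theorem d2_idP_lt_of_pLe {q p : PP k} (h : pLe q p) (hne : q ≠ p) :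
    d2 (idP k) q < d2 (idP k) p := by
  have := d2_nonneg q p
  have : d2 q p ≠ 0 := fun h₀ => hne (eq_of_d2_eq_zero h₀)
  unfold pLe at h
  omega

/-- Möbius inversion: the geodesic order is triangular with respect to `d(id_k, ·)`. -/
theorem eq_of_sum_pLe_eq {M : Type*} [AddCancelCommMonoid M] {f g : PP k → M}
    (h : ∀ p, (∑ q, if pLe q p then f q else 0) = ∑ q, if pLe q p then g q else 0)
    (p : PP k) :
    f p = g p := by
  induction hn : (d2 (idP k) p).toNat using Nat.strong_induction_on generalizing p with
  | _ n ih =>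
    have hsplit (u : PP k → M) : (∑ q, if pLe q p then u q else 0) =
        u p + ∑ q ∈ Finset.univ.erase p, if pLe q p then u q else 0 := by
      rw [← Finset.add_sum_erase _ _ (Finset.mem_univ p), if_pos (pLe_refl p)]
    have hlower : (∑ q ∈ Finset.univ.erase p, if pLe q p then f q else 0) =
        ∑ q ∈ Finset.univ.erase p, if pLe q p then g q else 0 := by
      refine Finset.sum_congr rfl fun q hq => ?_
      split_ifs with hle
      · have := d2_idP_lt_of_pLe hle (Finset.ne_of_mem_erase hq)
        have := d2_nonneg (idP k) q
        exact ih _ (by omega) q rfl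
      · rfl
    have := h p
    rwa [hsplit, hsplit, hlower, add_left_inj] at this

end GeodesicOrder

section Columns

variable {k : ℕ}

def col : Fin k ⊕ Fin k → Fin k := Sum.elim id id

theorem col_surjective : Function.Surjective (col (k := k)) := fun i => ⟨Sum.inl i, rfl⟩

theorem col_map {l : ℕ} (f : Fin l → Fin k) (x : Fin l ⊕ Fin l) :
    col (Sum.map f f x) = f (col x) := by
  cases x <;> rfl

theorem idP_rel {x y : Fin k ⊕ Fin k} : idP k x y ↔ col x = col y := Iff.rfl

/-- The partition with blocks `b ∪ b′`, for `b` running over the blocks of `ρ`. -/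
def ofCols (ρ : Setoid (Fin k)) : PP k := ρ.comap col

theorem idP_eq_ofCols_bot : idP k = ofCols ⊥ := by
  ext x y
  exact idP_rel

theorem idP_le_ofCols (ρ : Setoid (Fin k)) : idP k ≤ ofCols ρ := by
  rw [idP_eq_ofCols_bot]
  exact fun _ _ h => bot_le (a := ρ) h

theorem nC_ofCols (ρ : Setoid (Fin k)) : nC (ofCols ρ) = nC ρ :=
  nC_comap_of_surjective col_surjective ρ

theorem nC_idP : nC (idP k) = k := by
  rw [idP_eq_ofCols_bot, nC_ofCols, nC, Nat.card_congr Setoid.quotientBotEquiv, Nat.card_fin]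

theorem ofCols_sup (ρ ρ' : Setoid (Fin k)) : ofCols (ρ ⊔ ρ') = ofCols ρ ⊔ ofCols ρ' :=
  Setoid.comap_sup_of_forall_mem_range _ _ _ fun _ y _ => col_surjective y

theorem colSetoid_ofCols (ρ : Setoid (Fin k)) : colSetoid (ofCols ρ) = ρ := by
  rw [colSetoid, sup_eq_left.mpr (idP_le_ofCols ρ)]
  rfl

theorem ofCols_injective : Function.Injective (ofCols (k := k)) := fun ρ ρ' h => by
  rw [← colSetoid_ofCols ρ, h, colSetoid_ofCols]

theorem ofCols_comap_inl_of_idP_le {q : PP k} (h : idP k ≤ q) :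
    ofCols (q.comap Sum.inl) = q := by
  have hcol (x : Fin k ⊕ Fin k) : q (Sum.inl (col x)) x := by
    rcases x with i | i
    · exact q.refl' _
    · exact h (idP_rel.mpr rfl)
  ext x y
  show q (Sum.inl (col x)) (Sum.inl (col y)) ↔ q x y
  exact ⟨fun hxy => q.trans' (q.trans' (q.symm' (hcol x)) hxy) (hcol y),
    fun hxy => q.trans' (q.trans' (hcol x) hxy) (q.symm' (hcol y))⟩

theorem sup_idP_eq_ofCols (p : PP k) : p ⊔ idP k = ofCols (colSetoid p) :=
  (ofCols_comap_inl_of_idP_le le_sup_right).symm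

theorem colSetoid_rel_of_rel {p : PP k} {x y : Fin k ⊕ Fin k} (h : p x y) :
    colSetoid p (col x) (col y) := by
  have : (p ⊔ idP k) x y := le_sup_left (a := p) h
  rwa [sup_idP_eq_ofCols] at this

theorem pLe_ofCols_iff (π : Setoid (Fin k)) (p : PP k) :
    pLe (ofCols π) p ↔ π ≤ colSetoid p := by
  have hsup : ofCols π ⊔ p = ofCols (π ⊔ colSetoid p) := by
    rw [ofCols_sup, ← sup_idP_eq_ofCols, ← sup_assoc, sup_right_comm,
      sup_eq_left.mpr (idP_le_ofCols π)]
  have hle : colSetoid p ≤ π ⊔ colSetoid p := le_sup_right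
  simp only [pLe, d2, sup_eq_right.mpr (idP_le_ofCols π), sup_comm (idP k) p,
    sup_idP_eq_ofCols, hsup, nC_ofCols, nC_idP]
  rw [← sup_eq_right (a := π)]
  constructor
  · intro h
    exact (eq_of_le_of_nC_eq hle (by omega)).symm
  · intro h
    rw [h]
    ring

end Columns

section Classes

variable {k : ℕ} {q : Setoid (Fin k)} {b : Finset (Fin k)}

theorem class_mem_classesOf (q : Setoid (Fin k)) (i : Fin k) :
    Finset.univ.filter (q i) ∈ classesOf q :=
  Finset.mem_image_of_mem _ (Finset.mem_univ i)

theorem exists_eq_class_of_mem_classesOf (hb : b ∈ classesOf q) :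
    ∃ i, b = Finset.univ.filter (q i) := by
  obtain ⟨i, -, rfl⟩ := Finset.mem_image.mp hb
  exact ⟨i, rfl⟩

theorem rel_of_mem_classesOf (hb : b ∈ classesOf q) {i j : Fin k} (hi : i ∈ b) (hj : j ∈ b) :
    q i j := by
  obtain ⟨i₀, rfl⟩ := exists_eq_class_of_mem_classesOf hb
  simp only [Finset.mem_filter_univ] at hi hj
  exact q.trans' (q.symm' hi) hj

theorem mem_iff_of_mem_classesOf (hb : b ∈ classesOf q) {i j : Fin k} (h : q i j) :
    i ∈ b ↔ j ∈ b := by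
  obtain ⟨i₀, rfl⟩ := exists_eq_class_of_mem_classesOf hb
  simp only [Finset.mem_filter_univ]
  exact ⟨fun h' => q.trans' h' h, fun h' => q.trans' h' (q.symm' h)⟩

theorem nonempty_of_mem_classesOf (hb : b ∈ classesOf q) : b.Nonempty := by
  obtain ⟨i, rfl⟩ := exists_eq_class_of_mem_classesOf hb
  exact ⟨i, (Finset.mem_filter_univ i).mpr (q.refl' i)⟩

end Classes

section Extraction

variable {k : ℕ}

theorem exists_sumMap_orderEmbOfFin_eq {J : Finset (Fin k)} {x : Fin k ⊕ Fin k}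
    (hx : col x ∈ J) :
    ∃ u, Sum.map (J.orderEmbOfFin rfl) (J.orderEmbOfFin rfl) u = x := by
  obtain ⟨t, ht⟩ := (J.range_orderEmbOfFin rfl).ge hx
  rcases x with i | i
  · exact ⟨Sum.inl t, congrArg Sum.inl ht⟩
  · exact ⟨Sum.inr t, congrArg Sum.inr ht⟩

theorem colSetoid_extractP {p : PP k} {J : Finset (Fin k)}
    (hJ : ∀ i j, colSetoid p i j → i ∈ J → j ∈ J) :
    colSetoid (extractP p J) = (colSetoid p).comap (J.orderEmbOfFin rfl) := by
  set e := J.orderEmbOfFin rfl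
  have hid : idP J.card = (idP k).comap (Sum.map e e) := by
    ext u v
    simp only [Setoid.comap_rel, idP_rel, col_map, e.injective.eq_iff]
  have hsup : extractP p J ⊔ idP J.card = (p ⊔ idP k).comap (Sum.map e e) := by
    refine hid ▸ (Setoid.comap_sup_of_forall_mem_range _ _ _ fun u y huy => ?_).symm
    rw [sup_idP_eq_ofCols] at huy
    exact exists_sumMap_orderEmbOfFin_eq (hJ _ _ huy (col_map e u ▸ J.orderEmbOfFin_mem rfl _))
  rw [colSetoid, hsup]
  rfl

theorem colSetoid_extractP_eq_top {p : PP k} {b : Finset (Fin k)}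
    (hb : b ∈ classesOf (colSetoid p)) : colSetoid (extractP p b) = ⊤ := by
  rw [colSetoid_extractP fun i j h => (mem_iff_of_mem_classesOf hb h).mp]
  exact eq_top_iff.mpr fun s t _ =>
    rel_of_mem_classesOf hb (b.orderEmbOfFin_mem rfl s) (b.orderEmbOfFin_mem rfl t)

theorem nC_extractP_sup_idP_eq_one {p : PP k} {b : Finset (Fin k)}
    (hb : b ∈ classesOf (colSetoid p)) : nC (extractP p b ⊔ idP b.card) = 1 := by
  have : Nonempty (Fin b.card) :=
    ⟨⟨0, Finset.card_pos.mpr (nonempty_of_mem_classesOf hb)⟩⟩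
  rw [sup_idP_eq_ofCols, nC_ofCols, colSetoid_extractP_eq_top hb, nC_top_of_nonempty]

theorem extractP_ofCols_eq_top {π : Setoid (Fin k)} {b : Finset (Fin k)}
    (hb : b ∈ classesOf π) : extractP (ofCols π) b = ⊤ := by
  refine eq_top_iff.mpr fun u v _ => ?_
  show π (col (Sum.map _ _ u)) (col (Sum.map _ _ v))
  rw [col_map, col_map]
  exact rel_of_mem_classesOf hb (b.orderEmbOfFin_mem rfl _) (b.orderEmbOfFin_mem rfl _)

theorem eq_ofCols_of_extractP_eq_top {p : PP k}
    (h : ∀ b ∈ classesOf (colSetoid p), extractP p b = ⊤) : p = ofCols (colSetoid p) := by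
  ext x y
  refine ⟨colSetoid_rel_of_rel, fun hxy => ?_⟩
  obtain ⟨b, hb, hxb, hyb⟩ : ∃ b ∈ classesOf (colSetoid p), col x ∈ b ∧ col y ∈ b :=
    ⟨_, class_mem_classesOf _ (col x), (Finset.mem_filter_univ _).mpr ((colSetoid p).refl' _),
      (Finset.mem_filter_univ _).mpr hxy⟩
  obtain ⟨u, rfl⟩ := exists_sumMap_orderEmbOfFin_eq hxb
  obtain ⟨v, rfl⟩ := exists_sumMap_orderEmbOfFin_eq hyb
  show extractP p b u v
  rw [h b hb]
  trivial

end Extraction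

section Splitting

variable {k : ℕ}

def tensorSplit {m n : ℕ} :
    Fin (m + n) ⊕ Fin (m + n) ≃ (Fin m ⊕ Fin m) ⊕ (Fin n ⊕ Fin n) :=
  (Equiv.sumCongr finSumFinEquiv.symm finSumFinEquiv.symm).trans (Equiv.sumSumSumComm _ _ _ _)

theorem ptensor_eq_ker {m n : ℕ} (p : PP m) (q : PP n) :
    ptensor p q = Setoid.ker (Sum.map (Quotient.mk p) (Quotient.mk q) ∘ tensorSplit) := by
  unfold ptensor
  congr 1
  funext x
  rcases x with i | i <;> rcases h : finSumFinEquiv.symm i with a | b <;>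
    simp [tensorSplit, h]

/-- Lists `B` increasingly, then `Bᶜ` increasingly. -/
def splitEquiv (B : Finset (Fin k)) : Fin (B.card + Bᶜ.card) ≃ Fin k :=
  finSumFinEquiv.symm.trans <|
    (Equiv.sumCongr (B.orderIsoOfFin rfl).toEquiv
      ((Bᶜ.orderIsoOfFin rfl).toEquiv.trans
        (Equiv.subtypeEquivRight fun _ => Finset.mem_compl))).trans
    (Equiv.sumCompl (· ∈ B))

theorem splitEquiv_apply (B : Finset (Fin k)) (i : Fin (B.card + Bᶜ.card)) :
    splitEquiv B i =
      Sum.elim (B.orderEmbOfFin rfl) (Bᶜ.orderEmbOfFin rfl) (finSumFinEquiv.symm i) := by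
  rcases h : finSumFinEquiv.symm i <;> simp [splitEquiv, h]

theorem sumMap_splitEquiv (B : Finset (Fin k))
    (x : Fin (B.card + Bᶜ.card) ⊕ Fin (B.card + Bᶜ.card)) :
    Sum.map (splitEquiv B) (splitEquiv B) x =
      Sum.elim (Sum.map (B.orderEmbOfFin rfl) (B.orderEmbOfFin rfl))
        (Sum.map (Bᶜ.orderEmbOfFin rfl) (Bᶜ.orderEmbOfFin rfl)) (tensorSplit x) := by
  rcases x with i | i <;> rcases h : finSumFinEquiv.symm i with a | b <;>
    simp [tensorSplit, splitEquiv_apply, h]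

theorem comp_splitEquiv {α : Type*} (B : Finset (Fin k)) (a : Fin k → α) :
    a ∘ splitEquiv B = Fin.append (a ∘ B.orderEmbOfFin rfl) (a ∘ Bᶜ.orderEmbOfFin rfl) := by
  funext i
  induction i using Fin.addCases <;> simp [splitEquiv_apply]

theorem comap_splitEquiv_eq_ptensor {p : PP k} {B : Finset (Fin k)}
    (hB : ∀ i j, colSetoid p i j → (i ∈ B ↔ j ∈ B)) :
    p.comap (Sum.map (splitEquiv B) (splitEquiv B)) = ptensor (extractP p B) (extractP p Bᶜ) := by
  have hcross (u : Fin B.card ⊕ Fin B.card) (v : Fin Bᶜ.card ⊕ Fin Bᶜ.card) :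
      ¬ p (Sum.map (B.orderEmbOfFin rfl) (B.orderEmbOfFin rfl) u)
        (Sum.map (Bᶜ.orderEmbOfFin rfl) (Bᶜ.orderEmbOfFin rfl) v) := fun h => by
    have h' := hB _ _ (colSetoid_rel_of_rel h)
    rw [col_map, col_map] at h'
    exact Finset.mem_compl.mp (Bᶜ.orderEmbOfFin_mem rfl _) (h'.mp (B.orderEmbOfFin_mem rfl _))
  ext x y
  rw [ptensor_eq_ker, Setoid.comap_rel, Setoid.ker_def, sumMap_splitEquiv, sumMap_splitEquiv,
    Function.comp_apply, Function.comp_apply]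
  rcases tensorSplit x with u | u <;> rcases tensorSplit y with v | v <;>
    simp only [Sum.elim_inl, Sum.elim_inr, Sum.map_inl, Sum.map_inr,
      Sum.inl.injEq, Sum.inr.injEq, reduceCtorEq, Quotient.eq, iff_false]
  · rfl
  · exact hcross u v
  · exact fun h => hcross v u (p.symm' h)
  · rfl

end Splitting

section Merging

variable {k : ℕ} {B : Finset (Fin k)}

theorem orderEmbOfFin_ne_orderEmbOfFin_compl (t : Fin B.card) (t' : Fin Bᶜ.card) :
    B.orderEmbOfFin rfl t ≠ Bᶜ.orderEmbOfFin rfl t' := fun h =>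
  Finset.mem_compl.mp (Bᶜ.orderEmbOfFin_mem rfl t') (h ▸ B.orderEmbOfFin_mem rfl t)

theorem splitEquiv_symm_orderEmbOfFin (t : Fin B.card) :
    (splitEquiv B).symm (B.orderEmbOfFin rfl t) = finSumFinEquiv (Sum.inl t) :=
  (splitEquiv B).symm_apply_eq.mpr (by simp [splitEquiv_apply])

theorem splitEquiv_symm_orderEmbOfFin_compl (t : Fin Bᶜ.card) :
    (splitEquiv B).symm (Bᶜ.orderEmbOfFin rfl t) = finSumFinEquiv (Sum.inr t) :=
  (splitEquiv B).symm_apply_eq.mpr (by simp [splitEquiv_apply])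

/-- The set partition of `Fin k` that is `π₁` on `B` and `π₂` on `Bᶜ`. -/
def mergeAlong (B : Finset (Fin k)) (π₁ : Setoid (Fin B.card)) (π₂ : Setoid (Fin Bᶜ.card)) :
    Setoid (Fin k) :=
  Setoid.ker
    (Sum.map (Quotient.mk π₁) (Quotient.mk π₂) ∘ finSumFinEquiv.symm ∘ (splitEquiv B).symm)

variable {π₁ : Setoid (Fin B.card)} {π₂ : Setoid (Fin Bᶜ.card)}

@[simp]
theorem mergeAlong_rel_left {t t' : Fin B.card} :
    mergeAlong B π₁ π₂ (B.orderEmbOfFin rfl t) (B.orderEmbOfFin rfl t') ↔ π₁ t t' := by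
  rw [mergeAlong, Setoid.ker_def]
  simp [splitEquiv_symm_orderEmbOfFin, Quotient.eq]

@[simp]
theorem mergeAlong_rel_right {t t' : Fin Bᶜ.card} :
    mergeAlong B π₁ π₂ (Bᶜ.orderEmbOfFin rfl t) (Bᶜ.orderEmbOfFin rfl t') ↔ π₂ t t' := by
  rw [mergeAlong, Setoid.ker_def]
  simp [splitEquiv_symm_orderEmbOfFin_compl, Quotient.eq]

@[simp]
theorem not_mergeAlong_rel_left_right {t : Fin B.card} {t' : Fin Bᶜ.card} :
    ¬ mergeAlong B π₁ π₂ (B.orderEmbOfFin rfl t) (Bᶜ.orderEmbOfFin rfl t') := by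
  rw [mergeAlong, Setoid.ker_def]
  simp [splitEquiv_symm_orderEmbOfFin, splitEquiv_symm_orderEmbOfFin_compl]

@[simp]
theorem not_mergeAlong_rel_right_left {t : Fin Bᶜ.card} {t' : Fin B.card} :
    ¬ mergeAlong B π₁ π₂ (Bᶜ.orderEmbOfFin rfl t) (B.orderEmbOfFin rfl t') :=
  fun h => not_mergeAlong_rel_left_right (Setoid.symm' _ h)

theorem exists_orderEmbOfFin_eq_or_compl (B : Finset (Fin k)) (j : Fin k) :
    (∃ t, B.orderEmbOfFin rfl t = j) ∨ ∃ t, Bᶜ.orderEmbOfFin rfl t = j := by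
  by_cases hj : j ∈ B
  · exact Or.inl ((B.range_orderEmbOfFin rfl).ge hj)
  · exact Or.inr ((Bᶜ.range_orderEmbOfFin rfl).ge (Finset.mem_compl.mpr hj))

theorem comap_orderEmbOfFin_mergeAlong :
    (mergeAlong B π₁ π₂).comap (B.orderEmbOfFin rfl) = π₁ := by
  ext t t'
  exact mergeAlong_rel_left

theorem comap_orderEmbOfFin_compl_mergeAlong :
    (mergeAlong B π₁ π₂).comap (Bᶜ.orderEmbOfFin rfl) = π₂ := by
  ext t t'
  exact mergeAlong_rel_right

theorem mergeAlong_comap {π : Setoid (Fin k)} (hπ : ∀ i j, π i j → (i ∈ B ↔ j ∈ B)) :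
    mergeAlong B (π.comap (B.orderEmbOfFin rfl)) (π.comap (Bᶜ.orderEmbOfFin rfl)) = π := by
  have hcross (t : Fin B.card) (t' : Fin Bᶜ.card) :
      ¬ π (B.orderEmbOfFin rfl t) (Bᶜ.orderEmbOfFin rfl t') := fun h =>
    Finset.mem_compl.mp (Bᶜ.orderEmbOfFin_mem rfl t') ((hπ _ _ h).mp (B.orderEmbOfFin_mem rfl t))
  ext i j
  rcases exists_orderEmbOfFin_eq_or_compl B i with ⟨t, rfl⟩ | ⟨t, rfl⟩ <;>
  rcases exists_orderEmbOfFin_eq_or_compl B j with ⟨t', rfl⟩ | ⟨t', rfl⟩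
  · exact mergeAlong_rel_left
  · exact iff_of_false not_mergeAlong_rel_left_right (hcross t t')
  · exact iff_of_false not_mergeAlong_rel_right_left (fun h => hcross t' t (π.symm' h))
  · exact mergeAlong_rel_right

theorem mergeAlong_le_iff {c : Setoid (Fin k)} :
    mergeAlong B π₁ π₂ ≤ c ↔
      π₁ ≤ c.comap (B.orderEmbOfFin rfl) ∧ π₂ ≤ c.comap (Bᶜ.orderEmbOfFin rfl) := by
  refine ⟨fun h => ⟨fun t t' ht => h (mergeAlong_rel_left.mpr ht),
    fun t t' ht => h (mergeAlong_rel_right.mpr ht)⟩, fun ⟨h₁, h₂⟩ i j hij => ?_⟩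
  rcases exists_orderEmbOfFin_eq_or_compl B i with ⟨t, rfl⟩ | ⟨t, rfl⟩ <;>
  rcases exists_orderEmbOfFin_eq_or_compl B j with ⟨t', rfl⟩ | ⟨t', rfl⟩
  · exact h₁ (mergeAlong_rel_left.mp hij)
  · exact absurd hij not_mergeAlong_rel_left_right
  · exact absurd hij not_mergeAlong_rel_right_left
  · exact h₂ (mergeAlong_rel_right.mp hij)

theorem filter_mergeAlong_orderEmbOfFin (t : Fin B.card) :
    Finset.univ.filter (mergeAlong B π₁ π₂ (B.orderEmbOfFin rfl t)) =
      (Finset.univ.filter (π₁ t)).image (B.orderEmbOfFin rfl) := by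
  ext j
  rcases exists_orderEmbOfFin_eq_or_compl B j with ⟨t', rfl⟩ | ⟨t', rfl⟩ <;>
    simp [orderEmbOfFin_ne_orderEmbOfFin_compl]

theorem filter_mergeAlong_orderEmbOfFin_compl (t : Fin Bᶜ.card) :
    Finset.univ.filter (mergeAlong B π₁ π₂ (Bᶜ.orderEmbOfFin rfl t)) =
      (Finset.univ.filter (π₂ t)).image (Bᶜ.orderEmbOfFin rfl) := by
  ext j
  rcases exists_orderEmbOfFin_eq_or_compl B j with ⟨t', rfl⟩ | ⟨t', rfl⟩ <;>
    simp [(orderEmbOfFin_ne_orderEmbOfFin_compl _ _).symm]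

theorem classesOf_mergeAlong :
    classesOf (mergeAlong B π₁ π₂) =
      (classesOf π₁).image (Finset.image (B.orderEmbOfFin rfl)) ∪
        (classesOf π₂).image (Finset.image (Bᶜ.orderEmbOfFin rfl)) := by
  ext b
  simp only [classesOf, Finset.mem_union, Finset.mem_image, Finset.mem_univ, true_and,
    exists_exists_eq_and]
  constructor
  · rintro ⟨j, rfl⟩
    rcases exists_orderEmbOfFin_eq_or_compl B j with ⟨t, rfl⟩ | ⟨t, rfl⟩
    · exact Or.inl ⟨t, (filter_mergeAlong_orderEmbOfFin t).symm⟩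
    · exact Or.inr ⟨t, (filter_mergeAlong_orderEmbOfFin_compl t).symm⟩
  · rintro (⟨t, rfl⟩ | ⟨t, rfl⟩)
    · exact ⟨_, filter_mergeAlong_orderEmbOfFin t⟩
    · exact ⟨_, filter_mergeAlong_orderEmbOfFin_compl t⟩

end Merging

section MultiplicativeExtension

variable {α : Type*} (cum : ∀ n : ℕ, (Fin n → α) → ℂ) {k : ℕ}

/-- `cum_π(a) = ∏_{b ∈ π} cum_{|b|}(a_{|b})`. -/
noncomputable def multCum (π : Setoid (Fin k)) (a : Fin k → α) : ℂ :=
  ∏ b ∈ classesOf π, cum b.card (a ∘ b.orderEmbOfFin rfl)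

theorem cum_image_orderEmbOfFin (a : Fin k → α) {l : ℕ} {f : Fin l → Fin k}
    (hf : StrictMono f) (c : Finset (Fin l)) :
    cum (c.image f).card (a ∘ (c.image f).orderEmbOfFin rfl) =
      cum c.card (a ∘ f ∘ c.orderEmbOfFin rfl) := by
  have hc : (c.image f).card = c.card := Finset.card_image_of_injective c hf.injective
  -- `cum` depends on the length, so the length is transported along `hc` first
  have hcast : ∀ m (h : (c.image f).card = m),
      cum _ (a ∘ (c.image f).orderEmbOfFin rfl) = cum m (a ∘ (c.image f).orderEmbOfFin h) := by
    rintro m rfl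
    rfl
  rw [hcast _ hc, ← Finset.orderEmbOfFin_unique hc
    (fun t => Finset.mem_image_of_mem f (c.orderEmbOfFin_mem rfl t))
    (hf.comp (c.orderEmbOfFin rfl).strictMono)]
  rfl

variable {B : Finset (Fin k)}

theorem multCum_mergeAlong (π₁ : Setoid (Fin B.card)) (π₂ : Setoid (Fin Bᶜ.card))
    (a : Fin k → α) :
    multCum cum (mergeAlong B π₁ π₂) a =
      multCum cum π₁ (a ∘ B.orderEmbOfFin rfl) *
        multCum cum π₂ (a ∘ Bᶜ.orderEmbOfFin rfl) := by
  have hdisj : Disjoint ((classesOf π₁).image (Finset.image (B.orderEmbOfFin rfl)))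
      ((classesOf π₂).image (Finset.image (Bᶜ.orderEmbOfFin rfl))) := by
    simp only [Finset.disjoint_left, Finset.mem_image, not_exists, not_and]
    rintro _ ⟨b₁, hb₁, rfl⟩ b₂ - hb
    obtain ⟨t, ht⟩ := nonempty_of_mem_classesOf hb₁
    obtain ⟨t', -, ht'⟩ := Finset.mem_image.mp (hb ▸ Finset.mem_image_of_mem _ ht)
    exact orderEmbOfFin_ne_orderEmbOfFin_compl t t' ht'.symm
  rw [multCum, classesOf_mergeAlong, Finset.prod_union hdisj,
    Finset.prod_image fun _ _ _ _ h => Finset.image_injective (B.orderEmbOfFin rfl).injective h,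
    Finset.prod_image fun _ _ _ _ h => Finset.image_injective (Bᶜ.orderEmbOfFin rfl).injective h]
  simp only [cum_image_orderEmbOfFin cum a (Finset.orderEmbOfFin _ rfl).strictMono]
  rfl

theorem sum_multCum_le_eq_mul {c : Setoid (Fin k)} (hc : ∀ i j, c i j → (i ∈ B ↔ j ∈ B))
    (a : Fin k → α) :
    ∑ π ∈ Finset.univ.filter (· ≤ c), multCum cum π a =
      (∑ π₁ ∈ Finset.univ.filter (· ≤ c.comap (B.orderEmbOfFin rfl)),
          multCum cum π₁ (a ∘ B.orderEmbOfFin rfl)) *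
        ∑ π₂ ∈ Finset.univ.filter (· ≤ c.comap (Bᶜ.orderEmbOfFin rfl)),
          multCum cum π₂ (a ∘ Bᶜ.orderEmbOfFin rfl) := by
  rw [Finset.sum_mul_sum, ← Finset.sum_product']
  refine Finset.sum_nbij'
    (fun π => (π.comap (B.orderEmbOfFin rfl), π.comap (Bᶜ.orderEmbOfFin rfl)))
    (fun q => mergeAlong B q.1 q.2) ?_ ?_ ?_ ?_ ?_
  · simp only [Finset.mem_filter_univ, Finset.mem_product]
    exact fun π hπ => ⟨fun _ _ h => hπ h, fun _ _ h => hπ h⟩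
  · simp only [Finset.mem_filter_univ, Finset.mem_product]
    exact fun q hq => mergeAlong_le_iff.mpr hq
  · simp only [Finset.mem_filter_univ]
    exact fun π hπ => mergeAlong_comap fun i j h => hc i j (hπ h)
  · exact fun q _ => Prod.ext comap_orderEmbOfFin_mergeAlong comap_orderEmbOfFin_compl_mergeAlong
  · simp only [Finset.mem_filter_univ]
    intro π hπ
    conv_lhs => rw [← mergeAlong_comap fun i j h => hc i j (hπ h)]
    exact multCum_mergeAlong cum _ _ a

end MultiplicativeExtension

section ClassicalFamilies

variable {A : Type*} [Ring A] [Algebra ℂ A]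

theorem PTracial.m_comap_equiv (T : PTracial A) {n k : ℕ} (e : Fin n ≃ Fin k) (p : PP k)
    (a : Fin k → A) : T.m k p a = T.m n (p.comap (Sum.map e e)) (a ∘ e) := by
  obtain rfl : n = k := by simpa using Fintype.card_congr e
  exact T.m_symm n p e.symm a

def IsDeterministic (T : PTracial A) (A₁ : Set A) : Prop :=
  ∀ (k₁ k₂ : ℕ) (p₁ : PP k₁) (p₂ : PP k₂) (a : Fin k₁ → A) (b : Fin k₂ → A),
    (∀ s, a s ∈ A₁) → (∀ s, b s ∈ A₁) →
    T.m (k₁ + k₂) (ptensor p₁ p₂) (Fin.append a b) = T.m k₁ p₁ a * T.m k₂ p₂ b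

def IsClassical (T : PTracial A) (A₁ : Set A) : Prop :=
  IsDeterministic T A₁ ∧ ∀ (k : ℕ) (p : PP k) (a : Fin k → A), (∀ s, a s ∈ A₁) →
    nC (p ⊔ idP k) = 1 → T.m k p a = T.m k ⊤ a

def IsClassicalCumulant (T : PTracial A) (A₁ : Set A) (cum : ∀ n : ℕ, (Fin n → A) → ℂ) :
    Prop :=
  ∀ (n : ℕ) (a : Fin n → A), (∀ s, a s ∈ A₁) →
    T.m n ⊤ a = ∑ π : Setoid (Fin n), multCum cum π a

theorem IsDeterministic.m_eq_mul {T : PTracial A} {A₁ : Set A} (hdet : IsDeterministic T A₁)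
    {k : ℕ} {p : PP k} {B : Finset (Fin k)}
    (hB : ∀ i j, colSetoid p i j → (i ∈ B ↔ j ∈ B))
    {a : Fin k → A} (ha : ∀ s, a s ∈ A₁) :
    T.m k p a = T.m B.card (extractP p B) (a ∘ B.orderEmbOfFin rfl) *
      T.m Bᶜ.card (extractP p Bᶜ) (a ∘ Bᶜ.orderEmbOfFin rfl) := by
  rw [T.m_comap_equiv (splitEquiv B), comap_splitEquiv_eq_ptensor hB, comp_splitEquiv]
  exact hdet _ _ _ _ _ _ (fun _ => ha _) (fun _ => ha _)

end ClassicalFamilies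

section MomentFormula

variable {A : Type*} [Ring A] [Algebra ℂ A] {T : PTracial A} {A₁ : Set A}
  {cum : ∀ n : ℕ, (Fin n → A) → ℂ}

theorem IsClassical.m_eq_sum_multCum (hcl : IsClassical T A₁)
    (hcum : IsClassicalCumulant T A₁ cum) {k : ℕ} (p : PP k) {a : Fin k → A}
    (ha : ∀ s, a s ∈ A₁) :
    T.m k p a = ∑ π ∈ Finset.univ.filter (· ≤ colSetoid p), multCum cum π a := by
  induction k using Nat.strong_induction_on with
  | _ k ih =>
  rcases isEmpty_or_nonempty (Fin k) with hk | ⟨⟨i⟩⟩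
  · obtain rfl : p = ⊤ := Setoid.ext fun x => isEmptyElim x
    have hcol : colSetoid (⊤ : PP k) = ⊤ := Setoid.ext fun x => isEmptyElim x
    simp only [hcum k a ha, hcol, le_top, Finset.filter_true]
  set B := Finset.univ.filter (colSetoid p i)
  have hB : B ∈ classesOf (colSetoid p) := class_mem_classesOf _ i
  have hBsat : ∀ i j, colSetoid p i j → (i ∈ B ↔ j ∈ B) := fun _ _ h =>
    mem_iff_of_mem_classesOf hB h
  have hBcsat : ∀ i j, colSetoid p i j → (i ∈ Bᶜ ↔ j ∈ Bᶜ) := fun i j h => by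
    simp only [Finset.mem_compl, hBsat i j h]
  have hlt : Bᶜ.card < k := by
    simpa using (Finset.card_compl_lt_iff_nonempty B).mpr (nonempty_of_mem_classesOf hB)
  have hcycle : T.m B.card (extractP p B) (a ∘ B.orderEmbOfFin rfl) =
      ∑ π₁, multCum cum π₁ (a ∘ B.orderEmbOfFin rfl) :=
    (hcl.2 _ _ _ (fun _ => ha _) (nC_extractP_sup_idP_eq_one hB)).trans (hcum _ _ fun _ => ha _)
  rw [hcl.1.m_eq_mul hBsat ha, hcycle, ih _ hlt _ (a := a ∘ Bᶜ.orderEmbOfFin rfl) fun _ => ha _,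
    sum_multCum_le_eq_mul cum hBsat,
    ← colSetoid_extractP fun _ _ h => (hBsat _ _ h).mp,
    ← colSetoid_extractP fun _ _ h => (hBcsat _ _ h).mp, colSetoid_extractP_eq_top hB]
  simp only [le_top, Finset.filter_true]

end MomentFormula

section CycleCumulants

variable {α : Type*} (cum : ∀ n : ℕ, (Fin n → α) → ℂ) {k : ℕ}

/-- `∏_{b cycle of p} δ_{p_{|b} = 0_{|b|}} · cum_{|b|}(a_{|b})`. -/
noncomputable def cycleCum (p : PP k) (a : Fin k → α) : ℂ :=
  ∏ b ∈ classesOf (colSetoid p),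
    if extractP p b = ⊤ then cum b.card (a ∘ b.orderEmbOfFin rfl) else 0

theorem cycleCum_ofCols (π : Setoid (Fin k)) (a : Fin k → α) :
    cycleCum cum (ofCols π) a = multCum cum π a := by
  rw [cycleCum, colSetoid_ofCols]
  exact Finset.prod_congr rfl fun b hb => if_pos (extractP_ofCols_eq_top hb)

theorem cycleCum_eq_zero {p : PP k} (hp : p ∉ Set.range ofCols) (a : Fin k → α) :
    cycleCum cum p a = 0 := by
  by_contra h
  refine hp ⟨colSetoid p, (eq_ofCols_of_extractP_eq_top fun b hb => ?_).symm⟩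
  by_contra hne
  exact h (Finset.prod_eq_zero hb (if_neg hne))

theorem sum_pLe_cycleCum (p : PP k) (a : Fin k → α) :
    (∑ q, if pLe q p then cycleCum cum q a else 0) =
      ∑ π ∈ Finset.univ.filter (· ≤ colSetoid p), multCum cum π a := by
  calc (∑ q, if pLe q p then cycleCum cum q a else 0)
      = ∑ q ∈ Finset.univ.image ofCols, if pLe q p then cycleCum cum q a else 0 := by
        refine (Finset.sum_subset (Finset.subset_univ _) fun q _ hq => ?_).symm
        rw [cycleCum_eq_zero cum (by simpa using hq), ite_self]
    _ = ∑ π, if π ≤ colSetoid p then multCum cum π a else 0 := by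
        rw [Finset.sum_image fun _ _ _ _ h => ofCols_injective h]
        simp only [pLe_ofCols_iff, cycleCum_ofCols]
    _ = ∑ π ∈ Finset.univ.filter (· ≤ colSetoid p), multCum cum π a :=
        (Finset.sum_filter _ _).symm

end CycleCumulants

/-- For a classical family `A₁` (deterministic, and with `m_p = m_{0_k}`
for every irreducible `p`), the `P`-cumulants of tuples from `A₁` are
`κ_p(a₁,…,a_k) = ∏_{b cycle of p} δ_{p_{|b} = 0} · cum_{|b|}((a_i)_{i∈b})`, where the `cum`
are the classical cumulants of the family (defined by the classical moment–cumulant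
relation with respect to `m_{0_n} = m_⊤`). -/
theorem classical_family_cumulants {A : Type*} [Ring A] [Algebra ℂ A] (T : PTracial A)
    (κ : ∀ k : ℕ, PP k → (Fin k → A) → ℂ)
    (hκ : ∀ (k : ℕ) (p : PP k) (a : Fin k → A),
      T.m k p a = ∑ p' : PP k, if pLe p' p then κ k p' a else 0)
    (A₁ : Set A)
    (hdet : ∀ (k₁ k₂ : ℕ) (p₁ : PP k₁) (p₂ : PP k₂) (a : Fin k₁ → A) (b : Fin k₂ → A),
      (∀ s, a s ∈ A₁) → (∀ s, b s ∈ A₁) →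
      T.m (k₁ + k₂) (ptensor p₁ p₂) (Fin.append a b) = T.m k₁ p₁ a * T.m k₂ p₂ b)
    (hclass : ∀ (k : ℕ) (p : PP k) (a : Fin k → A), (∀ s, a s ∈ A₁) →
      nC (p ⊔ idP k) = 1 → T.m k p a = T.m k ⊤ a)
    (cum : ∀ n : ℕ, (Fin n → A) → ℂ)
    (hcum : ∀ (n : ℕ) (a : Fin n → A), (∀ s, a s ∈ A₁) →
      T.m n ⊤ a = ∑ π : Setoid (Fin n),
        ∏ b ∈ classesOf π, cum b.card fun t => a ((b.orderIsoOfFin rfl t : b) : Fin n))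
    (k : ℕ) (p : PP k) (a : Fin k → A) (ha : ∀ s, a s ∈ A₁) :
    κ k p a = ∏ b ∈ classesOf (colSetoid p),
      if extractP p b = (⊤ : PP b.card) then
        cum b.card fun t => a ((b.orderIsoOfFin rfl t : b) : Fin k)
      else 0 := by
  have hcl : IsClassical T A₁ := ⟨hdet, hclass⟩
  have hmoments (q : PP k) : T.m k q a = ∑ q', if pLe q' q then cycleCum cum q' a else 0 := by
    rw [sum_pLe_cycleCum, hcl.m_eq_sum_multCum hcum q ha]
  exact eq_of_sum_pLe_eq (f := fun q => κ k q a) (g := fun q => cycleCum cum q a)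
    (fun q => (hκ k q a).symm.trans (hmoments q)) p
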